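/- Define the polynomial P(a, s) = (−2880·a − 6408·a² − 3264·a³ − 270·a⁴) + (3048·a + 3712·a² + 828·a³ + 27·a⁴)·s + (−1416·a − 1320·a² − 366·a³)·s² + (474·a + 257·a² + 30·a³)·s³ + (−96·a − 48·a²)·s⁴ + (6·a + 3·a²)·s⁵. Then the set of real s with P(−10/9, s) = 0 is exactly {−1, 2, 10/3, 14/3, 7}. -/
import Mathlib


/-- The resonance polynomial of the Painlevé singularity analysis of the travelling-wave
equation: `a` is the coefficient of the leading-order term and `s` is the resonance. -/
def resonancePoly (a s : ℝ) : ℝ :=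
  (-2880 * a - 6408 * a ^ 2 - 3264 * a ^ 3 - 270 * a ^ 4)
    + (3048 * a + 3712 * a ^ 2 + 828 * a ^ 3 + 27 * a ^ 4) * s
    + (-1416 * a - 1320 * a ^ 2 - 366 * a ^ 3) * s ^ 2
    + (474 * a + 257 * a ^ 2 + 30 * a ^ 3) * s ^ 3
    + (-96 * a - 48 * a ^ 2) * s ^ 4
    + (6 * a + 3 * a ^ 2) * s ^ 5

/-- the real zeros of `s ↦ P(−10/9, s)` are exactly
`{−1, 2, 10/3, 14/3, 7}`. -/
theorem stmt_18 :
    {s : ℝ | resonancePoly (-10/9) s = 0} = {-1, 2, 10/3, 14/3, 7} := by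
  ext s
  have h : resonancePoly (-10/9) s
      = -80/27 * (s + 1) * (s - 2) * (s - 10/3) * (s - 14/3) * (s - 7) := by
    unfold resonancePoly; ring
  simp only [Set.mem_setOf_eq, Set.mem_insert_iff, Set.mem_singleton_iff, h,
    mul_eq_zero, sub_eq_zero]
  constructor
  · rintro ((((h | h) | h) | h) | h)
    · rcases h with h | h
      · norm_num at h
      · left; linarith
    · right; left; exact h
    · right; right; left; exact h
    · right; right; right; left; exact h
    · right; right; right; right; exact h
  · rintro (h | h | h | h | h) <;> subst h <;> norm_num
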